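/- arXiv:0705.3006 — 9 statements merged into one kernel-verified Lean document; each statement's English description precedes it below -/
import Mathlib

section
/- Let G be a finite group and let u = Σ_{g∈G} a_g·g be a torsion unit in V(ℤG) with u ≠ 1. Then the coefficient a_1 of the identity element of G in u is 0 (Berman–Higman theorem). Consequently, the partial augmentation of u at the conjugacy class {1} is 0 and the sum of the partial augmentations of u over all conjugacy classes of G equals 1. -/
open scoped Classical

/-!
The left regular representation turns a torsion unit `u` of `ℤG` into an integer matrix of finite
order whose trace is `|G| • a`, where `a` is the coefficient of `1` in `u`. Its eigenvalues are
roots of unity, so `|G| * |a| ≤ |G|`. If `a ≠ 0`, then `|a| = 1`, equality in the triangle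
inequality forces every eigenvalue to be `a`, and since a matrix of finite order is
diagonalisable (its minimal polynomial divides the separable `X ^ n - 1`) the matrix is `a • 1`.
Hence `u = a`, and augmentation `1` gives `u = 1`.
-/

open Polynomial ComplexConjugate

theorem Complex.re_lt_one_of_norm_le_one {z : ℂ} (hz : ‖z‖ ≤ 1) (hne : z ≠ 1) :
    z.re < 1 := by
  by_contra! hre
  have hsq : z.re * z.re + z.im * z.im ≤ 1 := by
    rw [← Complex.normSq_apply, ← Complex.sq_norm]; nlinarith [norm_nonneg z]
  exact hne (Complex.ext (by rw [Complex.one_re]; nlinarith) (by rw [Complex.one_im]; nlinarith))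

theorem Multiset.eq_of_norm_le_one_of_sum_eq_card_nsmul {s : Multiset ℂ} {c : ℂ}
    (hc : ‖c‖ = 1) (hs : ∀ μ ∈ s, ‖μ‖ ≤ 1) (hsum : s.sum = card s • c) :
    ∀ μ ∈ s, μ = c := by
  have hcc : c * conj c = 1 := by
    rw [Complex.mul_conj', hc]; simp
  have hle : ∀ μ ∈ s, ‖μ * conj c‖ ≤ 1 := fun μ hμ => by
    simpa [hc] using hs μ hμ
  have hre_sum : (s.map fun μ => (μ * conj c).re).sum = card s := by
    have h := map_multiset_sum Complex.reAddGroupHom (s.map fun μ => μ * conj c)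
    rw [Complex.coe_reAddGroupHom, Multiset.map_map, Multiset.sum_map_mul_right, Multiset.map_id',
      hsum, nsmul_eq_mul, mul_assoc, hcc, mul_one, Complex.natCast_re] at h
    exact h.symm
  intro μ hμ
  by_contra hne
  have hlt := Multiset.sum_lt_sum (g := fun _ => (1 : ℝ))
    (fun ν hν => (Complex.re_le_norm _).trans (hle ν hν))
    ⟨μ, hμ, Complex.re_lt_one_of_norm_le_one (hle μ hμ) fun h => hne (by
      rw [← mul_one μ, ← hcc, ← mul_assoc, mul_right_comm, h, one_mul])⟩
  rw [hre_sum, Multiset.map_const', Multiset.sum_replicate, nsmul_one] at hlt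
  exact hlt.false

namespace Matrix

variable {m : Type*} [Fintype m] [DecidableEq m]

theorem pow_eq_one_of_mem_roots_charpoly {K : Type*} [Field K] {A : Matrix m m K} {n : ℕ}
    (hA : A ^ n = 1) {μ : K} (hμ : μ ∈ A.charpoly.roots) : μ ^ n = 1 := by
  have hpow : μ ^ n ∈ spectrum K (A ^ n) :=
    spectrum.pow_mem_pow A n (mem_spectrum_iff_isRoot_charpoly.2 (isRoot_of_mem_roots hμ))
  rw [hA, mem_spectrum_iff_isRoot_charpoly, charpoly_one, IsRoot, eval_pow, eval_sub, eval_X,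
    eval_one] at hpow
  exact sub_eq_zero.1 (pow_eq_zero_iff'.1 hpow).1

theorem eq_algebraMap_of_pow_eq_one_of_charpoly_eq {K : Type*} [Field K] {A : Matrix m m K}
    {n : ℕ} (hn : (n : K) ≠ 0) (hA : A ^ n = 1) {c : K}
    (hχ : A.charpoly = (X - C c) ^ Fintype.card m) : A = algebraMap K _ c := by
  rcases isEmpty_or_nonempty m with hm | hm
  · exact Subsingleton.elim _ _
  have hsq : Squarefree (minpoly K A) :=
    (separable_X_pow_sub_C 1 hn one_ne_zero).squarefree.squarefree_of_dvd
      (minpoly.dvd K A (by simp [hA]))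
  have hdvd : minpoly K A ∣ X - C c :=
    (hsq.dvd_pow_iff_dvd Fintype.card_ne_zero).1 (hχ ▸ minpoly_dvd_charpoly A)
  simpa [sub_eq_zero] using minpoly.dvd_iff.1 hdvd

theorem norm_eq_one_of_mem_roots_charpoly {A : Matrix m m ℂ} {n : ℕ} (hn : n ≠ 0)
    (hA : A ^ n = 1) {μ : ℂ} (hμ : μ ∈ A.charpoly.roots) : ‖μ‖ = 1 :=
  Complex.norm_eq_one_of_pow_eq_one (pow_eq_one_of_mem_roots_charpoly hA hμ) hn

theorem card_roots_charpoly {K : Type*} [Field K] [IsAlgClosed K] (A : Matrix m m K) :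
    Multiset.card A.charpoly.roots = Fintype.card m :=
  (splits_iff_card_roots.1 (IsAlgClosed.splits _)).trans A.charpoly_natDegree_eq_dim

theorem norm_trace_le_card_of_pow_eq_one {A : Matrix m m ℂ} {n : ℕ} (hn : n ≠ 0)
    (hA : A ^ n = 1) : ‖A.trace‖ ≤ Fintype.card m := by
  rw [trace_eq_sum_roots_charpoly, ← card_roots_charpoly A]
  refine (norm_multiset_sum_le _).trans ?_
  simpa using Multiset.sum_map_le_sum_map _ (fun _ => (1 : ℝ))
    fun μ hμ => (norm_eq_one_of_mem_roots_charpoly hn hA hμ).le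

theorem eq_algebraMap_of_pow_eq_one_of_trace_eq {A : Matrix m m ℂ} {n : ℕ} (hn : n ≠ 0)
    (hA : A ^ n = 1) {c : ℂ} (hc : ‖c‖ = 1) (htr : A.trace = Fintype.card m • c) :
    A = algebraMap ℂ _ c := by
  have hroots : ∀ μ ∈ A.charpoly.roots, μ = c :=
    Multiset.eq_of_norm_le_one_of_sum_eq_card_nsmul hc
      (fun μ hμ => (norm_eq_one_of_mem_roots_charpoly hn hA hμ).le)
      (by rw [← trace_eq_sum_roots_charpoly, card_roots_charpoly, htr])
  have hχ : A.charpoly = (X - C c) ^ Fintype.card m := by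
    rw [(IsAlgClosed.splits A.charpoly).eq_prod_roots_of_monic A.charpoly_monic,
      Multiset.eq_replicate.2 ⟨card_roots_charpoly A, hroots⟩, Multiset.map_replicate,
      Multiset.prod_replicate]
  exact eq_algebraMap_of_pow_eq_one_of_charpoly_eq (Nat.cast_ne_zero.2 hn) hA hχ

theorem eq_intCast_of_pow_eq_one_of_trace_eq {A : Matrix m m ℤ} {n : ℕ} (hn : n ≠ 0)
    (hA : A ^ n = 1) {a : ℤ} (ha : a ≠ 0) (htr : A.trace = Fintype.card m • a) :
    A = a := by
  rcases isEmpty_or_nonempty m with hm | hm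
  · exact Subsingleton.elim _ _
  set B := (Int.castRingHom ℂ).mapMatrix A
  have hB : B ^ n = 1 := by rw [← map_pow, hA, map_one]
  have hBtr : B.trace = Fintype.card m • (a : ℂ) := by
    simpa [B, htr] using (AddMonoidHom.map_trace (Int.castRingHom ℂ) A).symm
  have hnorm : ‖(a : ℂ)‖ = 1 := by
    have hle := norm_trace_le_card_of_pow_eq_one hn hB
    rw [hBtr, nsmul_eq_mul, norm_mul, Complex.norm_natCast, Complex.norm_intCast] at hle
    have hcard : (0 : ℝ) < Fintype.card m := by exact_mod_cast Fintype.card_pos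
    have h1 : (1 : ℝ) ≤ |(a : ℝ)| := by exact_mod_cast Int.one_le_abs ha
    rw [Complex.norm_intCast]
    nlinarith
  have hBa := eq_algebraMap_of_pow_eq_one_of_trace_eq hn hB hnorm hBtr
  have hinj : Function.Injective ((Int.castRingHom ℂ).mapMatrix : Matrix m m ℤ →+* _) :=
    map_injective Int.cast_injective
  apply hinj
  rw [map_intCast]
  exact hBa.trans (map_intCast _ a)

end Matrix

namespace MonoidAlgebra

variable {G : Type*} [Group G] [Fintype G]

theorem leftMulMatrix_basis_apply_self {k : Type*} [CommRing k] (x : MonoidAlgebra k G) (g : G) :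
    Algebra.leftMulMatrix (MonoidAlgebra.basis G k) x g g = x.coeff 1 := by
  rw [Algebra.leftMulMatrix_eq_repr_mul]
  change (x * single g 1).coeff g = x.coeff 1
  rw [coeff_mul_single_apply, mul_inv_cancel, mul_one]

theorem trace_leftMulMatrix_basis {k : Type*} [CommRing k] (x : MonoidAlgebra k G) :
    (Algebra.leftMulMatrix (MonoidAlgebra.basis G k) x).trace = Fintype.card G • x.coeff 1 := by
  simp [Matrix.trace, leftMulMatrix_basis_apply_self]

theorem eq_intCast_coeff_one_of_isOfFinOrder {u : (MonoidAlgebra ℤ G)ˣ} (hu : IsOfFinOrder u)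
    (h1 : (u : MonoidAlgebra ℤ G).coeff 1 ≠ 0) :
    (u : MonoidAlgebra ℤ G) = ((u : MonoidAlgebra ℤ G).coeff 1 : MonoidAlgebra ℤ G) := by
  set b := MonoidAlgebra.basis G ℤ
  have hpow : Algebra.leftMulMatrix b u ^ orderOf u = 1 := by
    rw [← map_pow, ← Units.val_pow_eq_pow_val, pow_orderOf_eq_one, Units.val_one, map_one]
  apply Algebra.leftMulMatrix_injective b
  rw [map_intCast]
  exact Matrix.eq_intCast_of_pow_eq_one_of_trace_eq hu.orderOf_pos.ne' hpow h1
    (trace_leftMulMatrix_basis _)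

end MonoidAlgebra

/-- **Berman–Higman theorem.** If `u` is a nontrivial torsion unit of augmentation `1`
in the integral group ring `ℤG` of a finite group `G`, then the coefficient of the
identity element in `u` is `0`; consequently the partial augmentation of `u` at the
conjugacy class `{1}` vanishes and the partial augmentations of `u` over all conjugacy
classes of `G` sum to `1`. -/
theorem berman_higman {G : Type*} [Group G] [Fintype G]
    (u : (MonoidAlgebra ℤ G)ˣ)
    (hnorm : ∑ g : G, (u : MonoidAlgebra ℤ G).coeff g = 1)
    (htor : IsOfFinOrder u)
    (hne : u ≠ 1) :
    (u : MonoidAlgebra ℤ G).coeff 1 = 0 ∧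
    (∑ g ∈ Finset.univ.filter (fun g : G => ConjClasses.mk g = ConjClasses.mk (1 : G)),
        (u : MonoidAlgebra ℤ G).coeff g) = 0 ∧
    (∑ C : ConjClasses G,
        ∑ g ∈ Finset.univ.filter (fun g : G => ConjClasses.mk g = C),
          (u : MonoidAlgebra ℤ G).coeff g) = 1 := by
  have hcoeff : (u : MonoidAlgebra ℤ G).coeff 1 = 0 := by
    by_contra h
    have hu := MonoidAlgebra.eq_intCast_coeff_one_of_isOfFinOrder htor h
    have ha : (u : MonoidAlgebra ℤ G).coeff 1 = 1 := by
      rw [hu] at hnorm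
      simpa [MonoidAlgebra.intCast_def] using hnorm
    exact hne (Units.ext (by rw [hu, ha, Int.cast_one, Units.val_one]))
  refine ⟨hcoeff, ?_, ?_⟩
  · simpa [ConjClasses.mk_eq_mk_iff_isConj, Finset.sum_filter] using hcoeff
  · rwa [Finset.sum_fiberwise]
end

section
/- Let G be a finite group, let u ∈ V(ℤG) have finite order k, let z ∈ ℂ be a primitive k-th root of unity, and let χ be the character of a finite-dimensional complex representation of G, extended ℂ-linearly to the group ring (so that χ(v) = Σ_{g} a_g·χ(g) for v = Σ a_g·g). Then for every integer l and every divisor d of k, the number χ(u^d)·z^{−dl} lies in the cyclotomic field ℚ(z^d), and the number μ_l(u,χ) = (1/k)·Σ_{d|k} Tr_{ℚ(z^d)/ℚ}(χ(u^d)·z^{−dl}) is a non-negative integer (Luthar–Passi criterion, ordinary character case). -/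
/-!
Let `U` be the image of `u` under the extension of `ρ` to `ℤG`. Since `(z^{-l} U)^k = 1`, the
endomorphism `z^{-l} U` is the sum of `z^c P_c` over `c < k`, where the `P_c` are the idempotents
`(1/k) ∑_j (z^{-c-l} U)^j`; taking traces, `χ(u^d) z^{-dl} = p(z^d)` for the polynomial
`p = ∑_c m_c X^c` with `m_c = rank P_c ∈ ℕ`. So `χ(u^d) z^{-dl}` lies in `ℚ(z^d)`, and its trace is
the sum of `p(ξ)` over the primitive `(k/d)`-th roots of unity `ξ`. Summing over `d ∣ k` gives the
sum of `p` over all `k`-th roots of unity, that is `k m_0`, so `μ_l(u, χ) = m_0`.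
-/

open Finset

theorem IsPrimitiveRoot.sum_range_pow_pow {L : Type*} [CommRing L] [IsDomain L] {z : L} {k : ℕ}
    (hz : IsPrimitiveRoot z k) (j : ℕ) :
    ∑ i ∈ range k, (z ^ j) ^ i = if k ∣ j then (k : L) else 0 := by
  split_ifs with hj
  · simp [(hz.pow_eq_one_iff_dvd j).2 hj]
  · have hne : z ^ j - 1 ≠ 0 := sub_ne_zero.2 (mt (hz.pow_eq_one_iff_dvd j).1 hj)
    have h := geom_sum_mul (z ^ j) k
    rw [pow_right_comm, hz.pow_eq_one, one_pow, sub_self] at h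
    exact (mul_eq_zero.1 h).resolve_right hne

theorem IsPrimitiveRoot.sum_range_sum_range_mul_pow {L : Type*} [CommRing L] [IsDomain L] {z : L}
    {k : ℕ} (hz : IsPrimitiveRoot z k) (a : ℕ → L) :
    ∑ j ∈ range k, ∑ c ∈ range k, a c * (z ^ j) ^ c = k * a 0 := by
  rcases k.eq_zero_or_pos with rfl | hk
  · simp
  rw [sum_comm]
  have hswap : ∀ c, ∑ j ∈ range k, a c * (z ^ j) ^ c = a c * ∑ j ∈ range k, (z ^ c) ^ j := by
    intro c
    rw [mul_sum]
    exact sum_congr rfl fun j _ => by rw [pow_right_comm]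
  simp_rw [hswap, hz.sum_range_pow_pow]
  rw [sum_eq_single_of_mem 0 (mem_range.2 hk)]
  · simp [mul_comm]
  · intro c hc hc0
    rw [if_neg (fun h => hc0 (Nat.eq_zero_of_dvd_of_lt h (mem_range.1 hc))), mul_zero]

theorem pow_mul_geom_sum_of_pow_eq_one {A : Type*} [Ring A] {a : A} {k : ℕ} (ha : a ^ k = 1)
    (n : ℕ) :
    a ^ n * ∑ i ∈ range k, a ^ i = ∑ i ∈ range k, a ^ i := by
  have hmul : a * ∑ i ∈ range k, a ^ i = ∑ i ∈ range k, a ^ i := by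
    rw [← sub_eq_zero, ← sub_one_mul, mul_geom_sum, ha, sub_self]
  induction n with
  | zero => rw [pow_zero, one_mul]
  | succ n ih => rw [pow_succ, mul_assoc, hmul, ih]

section EigenProjection

variable {K A : Type*} [Field K] [Ring A] [Algebra K A]

def eigenProjection (k : ℕ) (ξ : K) (a : A) : A :=
  (k : K)⁻¹ • ∑ j ∈ range k, (ξ⁻¹ • a) ^ j

variable {k : ℕ} {ξ : K} {a : A}

theorem inv_smul_pow_eq_one (ha : a ^ k = 1) (hξ : ξ ^ k = 1) : (ξ⁻¹ • a) ^ k = 1 := by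
  rw [smul_pow, ha, inv_pow, hξ, inv_one, one_smul]

theorem pow_mul_eigenProjection (ha : a ^ k = 1) (hξ : ξ ^ k = 1) (n : ℕ) :
    a ^ n * eigenProjection k ξ a = ξ ^ n • eigenProjection k ξ a := by
  rcases eq_or_ne k 0 with rfl | hk0
  · simp [eigenProjection]
  have hξn : ξ ^ n ≠ 0 := pow_ne_zero _ (by rintro rfl; simp [zero_pow hk0] at hξ)
  have h := pow_mul_geom_sum_of_pow_eq_one (inv_smul_pow_eq_one ha hξ) n
  rw [smul_pow, smul_mul_assoc, inv_pow] at h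
  calc a ^ n * eigenProjection k ξ a = (k : K)⁻¹ • (a ^ n * ∑ j ∈ range k, (ξ⁻¹ • a) ^ j) :=
        mul_smul_comm _ _ _
    _ = ξ ^ n • (k : K)⁻¹ • ((ξ ^ n)⁻¹ • (a ^ n * ∑ j ∈ range k, (ξ⁻¹ • a) ^ j)) := by
        rw [smul_comm (ξ ^ n), smul_inv_smul₀ hξn]
    _ = ξ ^ n • eigenProjection k ξ a := by rw [h, eigenProjection]

theorem isIdempotentElem_eigenProjection (ha : a ^ k = 1) (hξ : ξ ^ k = 1)
    (hk : (k : K) ≠ 0) : IsIdempotentElem (eigenProjection k ξ a) := by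
  have h := pow_mul_geom_sum_of_pow_eq_one (inv_smul_pow_eq_one ha hξ)
  rw [IsIdempotentElem, eigenProjection, smul_mul_assoc, sum_mul]
  simp_rw [Algebra.mul_smul_comm, h, sum_const, card_range, ← Nat.cast_smul_eq_nsmul K,
    inv_smul_smul₀ hk]

theorem sum_eigenProjection {z : K} (hz : IsPrimitiveRoot z k) [NeZero k] (a : A) :
    ∑ c ∈ range k, eigenProjection k (z ^ c) a = 1 := by
  have hk : (k : K) ≠ 0 := hz.neZero'.out
  calc ∑ c ∈ range k, eigenProjection k (z ^ c) a
      = (k : K)⁻¹ • ∑ j ∈ range k, (∑ c ∈ range k, (z⁻¹ ^ j) ^ c) • a ^ j := by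
        simp only [eigenProjection, ← smul_sum, smul_pow, sum_smul]
        rw [sum_comm]
        refine congrArg _ (sum_congr rfl fun j _ => sum_congr rfl fun c _ => ?_)
        rw [← inv_pow, pow_right_comm]
    _ = 1 := by
        simp_rw [hz.inv.sum_range_pow_pow]
        rw [sum_eq_single_of_mem 0 (mem_range.2 (NeZero.pos k))]
        · simp [hk]
        · intro j hj hj0
          rw [if_neg (fun h => hj0 (Nat.eq_zero_of_dvd_of_lt h (mem_range.1 hj))), zero_smul]

theorem pow_eq_sum_smul_eigenProjection {z : K} (hz : IsPrimitiveRoot z k) [NeZero k]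
    (ha : a ^ k = 1) (n : ℕ) :
    a ^ n = ∑ c ∈ range k, (z ^ c) ^ n • eigenProjection k (z ^ c) a := by
  rw [← mul_one (a ^ n), ← sum_eigenProjection hz a, mul_sum]
  exact sum_congr rfl fun c _ =>
    pow_mul_eigenProjection ha (by rw [pow_right_comm, hz.pow_eq_one, one_pow]) n

end EigenProjection

theorem Module.End.exists_trace_pow_eq_sum {K W : Type*} [Field K] [AddCommGroup W] [Module K W]
    [FiniteDimensional K W] {U : Module.End K W} {k : ℕ} [NeZero k] (hU : U ^ k = 1) {z : K}
    (hz : IsPrimitiveRoot z k) :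
    ∃ m : ℕ → ℕ, ∀ n, LinearMap.trace K W (U ^ n) = ∑ c ∈ range k, (m c : K) * (z ^ n) ^ c := by
  refine ⟨fun c => Module.finrank K (LinearMap.range (eigenProjection k (z ^ c) U)), fun n => ?_⟩
  have hk : (k : K) ≠ 0 := hz.neZero'.out
  rw [pow_eq_sum_smul_eigenProjection hz hU n, map_sum]
  refine sum_congr rfl fun c _ => ?_
  have hξ : (z ^ c) ^ k = 1 := by rw [pow_right_comm, hz.pow_eq_one, one_pow]
  rw [map_smul, (LinearMap.IsIdempotentElem.isProj_range _
    (isIdempotentElem_eigenProjection hU hξ hk)).trace, smul_eq_mul, mul_comm, pow_right_comm]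

theorem Module.End.exists_trace_pow_mul_zpow_eq_sum {K W : Type*} [Field K] [AddCommGroup W]
    [Module K W] [FiniteDimensional K W] {U : Module.End K W} {k : ℕ} [NeZero k]
    (hU : U ^ k = 1) {z : K} (hz : IsPrimitiveRoot z k) (l : ℤ) :
    ∃ m : ℕ → ℕ, ∀ n : ℕ, LinearMap.trace K W (U ^ n) * z ^ (-(n : ℤ) * l) =
      ∑ c ∈ range k, (m c : K) * (z ^ n) ^ c := by
  have hUl : (z ^ (-l) • U) ^ k = 1 := by
    rw [smul_pow, hU, ← zpow_natCast, ← zpow_mul, mul_comm, zpow_mul, zpow_natCast,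
      hz.pow_eq_one, one_zpow, one_smul]
  obtain ⟨m, hm⟩ := exists_trace_pow_eq_sum hUl hz
  refine ⟨m, fun n => ?_⟩
  rw [← hm, smul_pow, map_smul, smul_eq_mul, ← zpow_natCast, ← zpow_mul, mul_comm]
  ring_nf

theorem Representation.trace_lift_apply {R G V : Type*} [CommRing R] [Monoid G] [Fintype G]
    [AddCommGroup V] [Module R V] (ρ : Representation R G V) (v : MonoidAlgebra ℤ G) :
    LinearMap.trace R V (MonoidAlgebra.lift ℤ (Module.End R V) G ρ v) =
      ∑ g, (v.coeff g : R) * LinearMap.trace R V (ρ g) := by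
  rw [MonoidAlgebra.lift_apply, Finsupp.sum_fintype _ _ (fun g => zero_smul ℤ (ρ g)), map_sum]
  simp_rw [map_zsmul, zsmul_eq_mul]

open Polynomial IntermediateField

theorem IsPrimitiveRoot.isCyclotomicExtension_adjoin {K L : Type*} [Field K] [Field L]
    [Algebra K L] {n : ℕ} [NeZero n] {ζ : L} (hζ : IsPrimitiveRoot ζ n) :
    IsCyclotomicExtension {n} K K⟮ζ⟯ := by
  change IsCyclotomicExtension {n} K K⟮ζ⟯.toSubalgebra
  rw [adjoin_simple_toSubalgebra_of_isAlgebraic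
    (hζ.isIntegral (NeZero.pos n)).tower_top.isAlgebraic]
  exact hζ.adjoin_isCyclotomicExtension K

theorem IsPrimitiveRoot.algebraMap_trace_aeval_gen {E : Type*} [Field E] [CharZero E]
    [IsAlgClosed E] {n : ℕ} [NeZero n] {ζ : E} (hζ : IsPrimitiveRoot ζ n) (p : ℚ[X]) :
    algebraMap ℚ E (Algebra.trace ℚ ℚ⟮ζ⟯ (aeval (AdjoinSimple.gen ℚ ζ) p)) =
      ∑ ξ ∈ primitiveRoots n E, aeval ξ p := by
  have : IsCyclotomicExtension {n} ℚ ℚ⟮ζ⟯ := hζ.isCyclotomicExtension_adjoin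
  have := adjoin.finiteDimensional (hζ.isIntegral (NeZero.pos n)).tower_top (K := ℚ)
  have hgen : IsPrimitiveRoot (AdjoinSimple.gen ℚ ζ) n :=
    IsPrimitiveRoot.coe_submonoidClass_iff.1 hζ
  rw [trace_eq_sum_embeddings (E := E), ← sum_coe_sort (primitiveRoots n E)]
  exact Fintype.sum_equiv
    (hgen.embeddingsEquivPrimitiveRoots E (cyclotomic.irreducible_rat (NeZero.pos n))) _ _
    (fun ψ => by simp [aeval_algHom_apply])

theorem IsPrimitiveRoot.sum_divisors_sum_primitiveRoots {R M : Type*} [CommRing R] [IsDomain R]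
    [AddCommMonoid M] {z : R} {k : ℕ} [NeZero k] (hz : IsPrimitiveRoot z k) (f : R → M) :
    ∑ d ∈ k.divisors, ∑ ξ ∈ primitiveRoots d R, f ξ = ∑ j ∈ range k, f (z ^ j) := by
  classical
  have hinj : Set.InjOn (z ^ ·) (range k) := fun i hi j hj h =>
    hz.pow_inj (mem_range.1 hi) (mem_range.1 hj) h
  have himage : (range k).image (z ^ ·) = nthRootsFinset k (1 : R) := by
    rw [nthRootsFinset_def, hz.nthRoots_eq (one_pow k)]
    simp [Finset.image]
  rw [← sum_biUnion (fun i _ j _ hij => IsPrimitiveRoot.disjoint hij),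
    ← IsPrimitiveRoot.nthRoots_one_eq_biUnion_primitiveRoots, ← himage, sum_image hinj]

theorem IsPrimitiveRoot.sum_divisors_algebraMap_trace_aeval_gen {E : Type*} [Field E] [CharZero E]
    [IsAlgClosed E] {k : ℕ} [NeZero k] {z : E} (hz : IsPrimitiveRoot z k) (p : ℚ[X]) :
    ∑ d ∈ k.divisors,
        algebraMap ℚ E (Algebra.trace ℚ ℚ⟮z ^ d⟯ (aeval (AdjoinSimple.gen ℚ (z ^ d)) p)) =
      ∑ j ∈ range k, aeval (z ^ j) p := by
  calc _ = ∑ d ∈ k.divisors, ∑ ξ ∈ primitiveRoots (k / d) E, aeval ξ p := by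
        refine sum_congr rfl fun d hd => ?_
        have hdk := Nat.dvd_of_mem_divisors hd
        have : NeZero (k / d) := ⟨(Nat.div_pos (Nat.le_of_dvd (NeZero.pos k) hdk)
          (Nat.pos_of_mem_divisors hd)).ne'⟩
        exact (hz.pow (NeZero.pos k) (Nat.mul_div_cancel' hdk).symm).algebraMap_trace_aeval_gen p
    _ = ∑ j ∈ range k, aeval (z ^ j) p := by
        rw [Nat.sum_div_divisors k (fun d => ∑ ξ ∈ primitiveRoots d E, aeval ξ p),
          hz.sum_divisors_sum_primitiveRoots]

theorem IsPrimitiveRoot.sum_divisors_trace_aeval_gen {E : Type*} [Field E] [CharZero E]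
    [IsAlgClosed E] {k : ℕ} [NeZero k] {z : E} (hz : IsPrimitiveRoot z k) (a : ℕ → ℚ) :
    ∑ d ∈ k.divisors, Algebra.trace ℚ ℚ⟮z ^ d⟯
        (aeval (AdjoinSimple.gen ℚ (z ^ d)) (∑ c ∈ range k, C (a c) * X ^ c)) = k * a 0 := by
  apply (algebraMap ℚ E).injective
  rw [map_sum, hz.sum_divisors_algebraMap_trace_aeval_gen]
  simp only [map_sum, map_mul, aeval_C, aeval_X_pow]
  rw [hz.sum_range_sum_range_mul_pow, map_natCast]

theorem luthar_passi_mu_nonneg_integer_general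
    {G : Type*} [Group G] [Fintype G]
    {V : Type*} [AddCommGroup V] [Module ℂ V] [FiniteDimensional ℂ V]
    (ρ : Representation ℂ G V)
    (u : (MonoidAlgebra ℤ G)ˣ)
    (k : ℕ) (hk : 0 < k) (hord : orderOf u = k)
    (z : ℂ) (hz : IsPrimitiveRoot z k)
    (χ : MonoidAlgebra ℤ G → ℂ)
    (hχ : ∀ v : MonoidAlgebra ℤ G,
      χ v = ∑ g : G, (v.coeff g : ℂ) * LinearMap.trace ℂ V (ρ g))
    (l : ℤ) :
    ∃ hmem : ∀ d ∈ k.divisors,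
        χ ((u ^ d : (MonoidAlgebra ℤ G)ˣ) : MonoidAlgebra ℤ G) * z ^ (-(d : ℤ) * l)
          ∈ IntermediateField.adjoin ℚ {z ^ d},
      ∃ m : ℕ,
        (1 / (k : ℚ)) *
          ∑ d ∈ k.divisors.attach,
            Algebra.trace ℚ (IntermediateField.adjoin ℚ {z ^ (d : ℕ)})
              ⟨χ ((u ^ (d : ℕ) : (MonoidAlgebra ℤ G)ˣ) : MonoidAlgebra ℤ G) *
                  z ^ (-((d : ℕ) : ℤ) * l), hmem d d.2⟩
          = (m : ℚ) := by
  have : NeZero k := ⟨hk.ne'⟩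
  set U := MonoidAlgebra.lift ℤ (Module.End ℂ V) G ρ u
  have hUk : U ^ k = 1 := by
    rw [← map_pow, ← Units.val_pow_eq_pow_val, ← hord, pow_orderOf_eq_one, Units.val_one, map_one]
  obtain ⟨m, hm⟩ := Module.End.exists_trace_pow_mul_zpow_eq_sum hUk hz l
  set p : ℚ[X] := ∑ c ∈ range k, C (m c : ℚ) * X ^ c
  have heval : ∀ d : ℕ, χ ↑(u ^ d) * z ^ (-(d : ℤ) * l) = aeval (z ^ d) p := fun d => by
    rw [hχ, ← ρ.trace_lift_apply, Units.val_pow_eq_pow_val, map_pow, hm]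
    simp [p]
  have hmem : ∀ d ∈ k.divisors,
      χ ((u ^ d : (MonoidAlgebra ℤ G)ˣ) : MonoidAlgebra ℤ G) * z ^ (-(d : ℤ) * l)
        ∈ IntermediateField.adjoin ℚ {z ^ d} := fun d _ => by
    rw [heval, ← AdjoinSimple.coe_aeval_gen_apply]
    exact SetLike.coe_mem _
  refine ⟨hmem, m 0, ?_⟩
  have hterm : ∀ d : k.divisors, ⟨_, hmem d d.2⟩ = aeval (AdjoinSimple.gen ℚ (z ^ (d : ℕ))) p :=
    fun d => Subtype.ext ((heval d).trans (AdjoinSimple.coe_aeval_gen_apply _ _ p).symm)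
  simp_rw [hterm]
  rw [sum_attach k.divisors (fun d => Algebra.trace ℚ _ (aeval (AdjoinSimple.gen ℚ (z ^ d)) p)),
    hz.sum_divisors_trace_aeval_gen, one_div, inv_mul_cancel_left₀ (by exact_mod_cast hk.ne')]

/-- **Luthar–Passi criterion (ordinary character case).** Let `u` be a normalized
torsion unit of order `k` in `ℤG`, `z ∈ ℂ` a primitive `k`-th root of unity, and `χ`
the character of a finite-dimensional complex representation of `G` extended
`ℂ`-linearly to the group ring. Then for every integer `l` and every divisor `d` of
`k` the number `χ(u^d)·z^{-dl}` lies in the cyclotomic field `ℚ(z^d)`, and the number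
`μ_l(u,χ) = (1/k)·∑_{d ∣ k} Tr_{ℚ(z^d)/ℚ}(χ(u^d)·z^{-dl})` is a non-negative
integer. -/
theorem luthar_passi_mu_nonneg_integer
    {G : Type*} [Group G] [Fintype G]
    {V : Type*} [AddCommGroup V] [Module ℂ V] [FiniteDimensional ℂ V]
    (ρ : Representation ℂ G V)
    (u : (MonoidAlgebra ℤ G)ˣ)
    (hnorm : ∑ g : G, (u : MonoidAlgebra ℤ G).coeff g = 1)
    (k : ℕ) (hk : 0 < k) (hord : orderOf u = k)
    (z : ℂ) (hz : IsPrimitiveRoot z k)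
    (χ : MonoidAlgebra ℤ G → ℂ)
    (hχ : ∀ v : MonoidAlgebra ℤ G,
      χ v = ∑ g : G, (v.coeff g : ℂ) * LinearMap.trace ℂ V (ρ g))
    (l : ℤ) :
    ∃ hmem : ∀ d ∈ k.divisors,
        χ ((u ^ d : (MonoidAlgebra ℤ G)ˣ) : MonoidAlgebra ℤ G) * z ^ (-(d : ℤ) * l)
          ∈ IntermediateField.adjoin ℚ {z ^ d},
      ∃ m : ℕ,
        (1 / (k : ℚ)) *
          ∑ d ∈ k.divisors.attach,
            Algebra.trace ℚ (IntermediateField.adjoin ℚ {z ^ (d : ℕ)})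
              ⟨χ ((u ^ (d : ℕ) : (MonoidAlgebra ℤ G)ˣ) : MonoidAlgebra ℤ G) *
                  z ^ (-((d : ℕ) : ℤ) * l), hmem d d.2⟩
          = (m : ℚ) :=
  luthar_passi_mu_nonneg_integer_general ρ u k hk hord z hz χ hχ l
end

section
/- For integers x, y with x + y = 1, the four rational numbers (1/29)((15x − 14y) + 8192), (1/29)(−(15x − 14y) + 2219), (1/29)(12x − 17y + 133), (1/29)(−17x + 12y + 133) are all non-negative integers if and only if −4 ≤ x ≤ 5. In particular, there are exactly 10 such pairs (x, y). -/
/-!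
With `y = 1 - x` the four numerators are `29 (x + 282)`, `29 (77 - x)`, `29 (x + 4)` and
`29 (5 - x)`, so integrality is automatic and non-negativity cuts `x` down to `[-4, 5]`.
-/

theorem exists_nat_div_eq_iff {d : ℕ} (hd : 0 < d) (m : ℤ) :
    (∃ n : ℕ, (m : ℚ) / d = n) ↔ (d : ℤ) ∣ m ∧ 0 ≤ m := by
  have hd' : (d : ℚ) ≠ 0 := by positivity
  constructor
  · rintro ⟨n, hn⟩
    have hm : m = d * n := by
      rw [div_eq_iff hd'] at hn
      exact_mod_cast hn.trans (mul_comm _ _)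
    exact ⟨⟨n, hm⟩, hm ▸ by positivity⟩
  · rintro ⟨⟨k, rfl⟩, hm⟩
    have hk : 0 ≤ k := (mul_nonneg_iff_of_pos_left (by omega)).mp hm
    refine ⟨k.toNat, ?_⟩
    have hk' : ((k.toNat : ℕ) : ℚ) = k := by exact_mod_cast Int.toNat_of_nonneg hk
    rw [hk']
    push_cast
    field_simp

theorem ncard_antidiagonal_Icc (c a b : ℤ) :
    {p : ℤ × ℤ | p.1 + p.2 = c ∧ a ≤ p.1 ∧ p.1 ≤ b}.ncard = (b + 1 - a).toNat := by
  have hset : {p : ℤ × ℤ | p.1 + p.2 = c ∧ a ≤ p.1 ∧ p.1 ≤ b} =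
      (Finset.Icc a b).image (fun x => (x, c - x)) := by
    ext ⟨x, y⟩
    simp only [Set.mem_ofPred_eq, Finset.coe_image, Set.mem_image, Finset.mem_coe,
      Finset.mem_Icc, Prod.mk.injEq]
    constructor
    · rintro ⟨hxy, hax, hxb⟩
      exact ⟨x, ⟨hax, hxb⟩, rfl, by omega⟩
    · rintro ⟨x, hx, rfl, rfl⟩
      exact ⟨by ring, hx⟩
  rw [hset, Set.ncard_coe_finset, Finset.card_image_of_injective _ fun x x' h => congrArg Prod.fst h,
    Int.card_Icc]

theorem order29_constraints_Ru_iff (x y : ℤ) (hxy : x + y = 1) :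
    ((∃ n : ℕ, (((15 * x - 14 * y) + 8192 : ℤ) : ℚ) / 29 = n) ∧
        (∃ n : ℕ, ((-(15 * x - 14 * y) + 2219 : ℤ) : ℚ) / 29 = n) ∧
        (∃ n : ℕ, ((12 * x - 17 * y + 133 : ℤ) : ℚ) / 29 = n) ∧
        (∃ n : ℕ, ((-17 * x + 12 * y + 133 : ℤ) : ℚ) / 29 = n)) ↔
      (-4 ≤ x ∧ x ≤ 5) := by
  have h29 := exists_nat_div_eq_iff (d := 29) (by norm_num)
  simp only [Nat.cast_ofNat] at h29
  simp only [h29]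
  omega

/-- Luthar–Passi constraints for units of order 29 in `V(ℤRu)`: for integers `x, y`
with `x + y = 1`, the four rationals `(1/29)((15x − 14y) + 8192)`,
`(1/29)(−(15x − 14y) + 2219)`, `(1/29)(12x − 17y + 133)`, `(1/29)(−17x + 12y + 133)`
are all non-negative integers iff `−4 ≤ x ≤ 5`; in particular there are exactly
10 such pairs. -/
theorem order29_constraints_Ru :
    (∀ x y : ℤ, x + y = 1 →
      (((∃ n : ℕ, (((15 * x - 14 * y) + 8192 : ℤ) : ℚ) / 29 = n) ∧
        (∃ n : ℕ, ((-(15 * x - 14 * y) + 2219 : ℤ) : ℚ) / 29 = n) ∧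
        (∃ n : ℕ, ((12 * x - 17 * y + 133 : ℤ) : ℚ) / 29 = n) ∧
        (∃ n : ℕ, ((-17 * x + 12 * y + 133 : ℤ) : ℚ) / 29 = n)) ↔
       (-4 ≤ x ∧ x ≤ 5))) ∧
    {p : ℤ × ℤ | p.1 + p.2 = 1 ∧
        (∃ n : ℕ, (((15 * p.1 - 14 * p.2) + 8192 : ℤ) : ℚ) / 29 = n) ∧
        (∃ n : ℕ, ((-(15 * p.1 - 14 * p.2) + 2219 : ℤ) : ℚ) / 29 = n) ∧
        (∃ n : ℕ, ((12 * p.1 - 17 * p.2 + 133 : ℤ) : ℚ) / 29 = n) ∧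
        (∃ n : ℕ, ((-17 * p.1 + 12 * p.2 + 133 : ℤ) : ℚ) / 29 = n)}.ncard = 10 := by
  refine ⟨order29_constraints_Ru_iff, ?_⟩
  have hset : {p : ℤ × ℤ | p.1 + p.2 = 1 ∧
        (∃ n : ℕ, (((15 * p.1 - 14 * p.2) + 8192 : ℤ) : ℚ) / 29 = n) ∧
        (∃ n : ℕ, ((-(15 * p.1 - 14 * p.2) + 2219 : ℤ) : ℚ) / 29 = n) ∧
        (∃ n : ℕ, ((12 * p.1 - 17 * p.2 + 133 : ℤ) : ℚ) / 29 = n) ∧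
        (∃ n : ℕ, ((-17 * p.1 + 12 * p.2 + 133 : ℤ) : ℚ) / 29 = n)} =
      {p : ℤ × ℤ | p.1 + p.2 = 1 ∧ -4 ≤ p.1 ∧ p.1 ≤ 5} := by
    ext ⟨x, y⟩
    simp only [Set.mem_ofPred_eq, and_congr_right_iff]
    exact order29_constraints_Ru_iff x y
  rw [hset, ncard_antidiagonal_Icc]
  rfl
end

section
/- There are no integers a, b with a + b = 1 such that the three rational numbers (1/21)(a + 405), (1/21)(12a + 30), (1/21)(−6a + 27) are all non-negative integers. -/
/-!
Integrality of `(a + 405)/21` forces `a ≡ 15 (mod 21)`, while non-negativity of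
`(12a + 30)/21` and `(-6a + 27)/21` confines `a` to `-2 ≤ a ≤ 4`, which contains no such residue.
-/

theorem Int.dvd_and_nonneg_of_cast_div_eq_natCast {z d : ℤ} (hd : 0 < d) {n : ℕ}
    (h : (z : ℚ) / d = n) : d ∣ z ∧ 0 ≤ z := by
  have hz : z = d * n := by
    rw [div_eq_iff (by exact_mod_cast hd.ne')] at h
    exact_mod_cast h.trans (mul_comm _ _)
  exact ⟨⟨n, hz⟩, hz ▸ mul_nonneg hd.le n.cast_nonneg⟩

/-- Luthar–Passi constraints excluding units of order 21 in `V(ℤRu)`: there are no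
integers `a, b` with `a + b = 1` such that `(1/21)(a + 405)`, `(1/21)(12a + 30)` and
`(1/21)(−6a + 27)` are all non-negative integers. -/
theorem no_order21_unit_Ru :
    ¬ ∃ a b : ℤ, a + b = 1 ∧
      (∃ n : ℕ, ((a + 405 : ℤ) : ℚ) / 21 = n) ∧
      (∃ n : ℕ, ((12 * a + 30 : ℤ) : ℚ) / 21 = n) ∧
      (∃ n : ℕ, ((-6 * a + 27 : ℤ) : ℚ) / 21 = n) := by
  rintro ⟨a, -, -, ⟨n₁, h₁⟩, ⟨n₂, h₂⟩, ⟨n₃, h₃⟩⟩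
  have h21 : (0 : ℤ) < 21 := by norm_num
  obtain ⟨hdvd, -⟩ := Int.dvd_and_nonneg_of_cast_div_eq_natCast h21 (by exact_mod_cast h₁)
  obtain ⟨-, hlower⟩ := Int.dvd_and_nonneg_of_cast_div_eq_natCast h21 (by exact_mod_cast h₂)
  obtain ⟨-, hupper⟩ := Int.dvd_and_nonneg_of_cast_div_eq_natCast h21 (by exact_mod_cast h₃)
  have ha_mod : a % 21 = 15 := by omega
  have ha_range : -2 ≤ a ∧ a ≤ 4 := by omega
  omega
end

section
/- There are no integers a, b, c with a + b + c = 1 such that, setting t = a + b, the two rational numbers (1/35)(72t + 390) and (1/35)(−96t + 1230) are both non-negative integers. -/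
/-! Divisibility of `72t + 390` by `35` forces `t ≡ 15 (mod 35)`, while non-negativity of the
two quotients confines `t` to `[-5, 12]`, which contains no such integer. -/

theorem Int.eq_mul_of_cast_div_eq_natCast {K : Type*} [Field K] [CharZero K] {z d : ℤ} {n : ℕ}
    (hd : d ≠ 0) (h : (z : K) / d = n) : z = d * n := by
  have hd' : (d : K) ≠ 0 := Int.cast_ne_zero.mpr hd
  exact_mod_cast (div_eq_iff hd').mp h |>.trans (mul_comm _ _)

/-- Luthar–Passi constraints excluding units of order 35 in `V(ℤRu)`: there are no
integers `a, b, c` with `a + b + c = 1` such that, with `t = a + b`, the rationals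
`(1/35)(72t + 390)` and `(1/35)(−96t + 1230)` are both non-negative integers. -/
theorem no_order35_unit_Ru :
    ¬ ∃ a b c : ℤ, a + b + c = 1 ∧
      (∃ n : ℕ, ((72 * (a + b) + 390 : ℤ) : ℚ) / 35 = n) ∧
      (∃ n : ℕ, ((-96 * (a + b) + 1230 : ℤ) : ℚ) / 35 = n) := by
  rintro ⟨a, b, -, -, ⟨n, hn⟩, ⟨m, hm⟩⟩
  have h₁ :=
    Int.eq_mul_of_cast_div_eq_natCast (K := ℚ) (d := 35) (by norm_num) (by exact_mod_cast hn)
  have h₂ :=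
    Int.eq_mul_of_cast_div_eq_natCast (K := ℚ) (d := 35) (by norm_num) (by exact_mod_cast hm)
  have hres : (a + b) % 35 = 15 := by omega
  have hlow : -5 ≤ a + b := by omega
  have hhigh : a + b ≤ 12 := by omega
  omega
end

section
/- There are no integers a, c with a + c = 1 such that the four rational numbers (1/39)(72c + 819), (1/39)(−36c + 819), (1/39)(c + 377), (1/39)(−12a − 24c + 51) are all non-negative integers. -/
/-! Substituting `a = 1 - c`, the fourth value is `(39 - 12c)/39`. Integrality of the third value
forces `c ≡ 13 (mod 39)`, while non-negativity of the first and fourth values confines `c` to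
`-11 ≤ c ≤ 3`, an interval containing no such residue. -/

theorem exists_natCast_eq_intCast_div_iff {m : ℤ} {d : ℕ} (hd : d ≠ 0) :
    (∃ n : ℕ, (m : ℚ) / d = n) ↔ 0 ≤ m ∧ (d : ℤ) ∣ m := by
  have hdq : (d : ℚ) ≠ 0 := Nat.cast_ne_zero.mpr hd
  constructor
  · rintro ⟨n, hn⟩
    have hm : m = n * d := by exact_mod_cast (div_eq_iff hdq).mp hn
    exact ⟨hm ▸ by positivity, ⟨n, by rw [hm, mul_comm]⟩⟩
  · rintro ⟨hm, k, rfl⟩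
    have hk : 0 ≤ k := nonneg_of_mul_nonneg_right hm (by positivity)
    refine ⟨k.toNat, ?_⟩
    rw [Int.cast_mul, Int.cast_natCast, mul_div_cancel_left₀ _ hdq]
    exact_mod_cast (Int.toNat_of_nonneg hk).symm

/-- Luthar–Passi constraints excluding units of order 39 in `V(ℤRu)`: there are no
integers `a, c` with `a + c = 1` such that `(1/39)(72c + 819)`, `(1/39)(−36c + 819)`,
`(1/39)(c + 377)` and `(1/39)(−12a − 24c + 51)` are all non-negative integers. -/
theorem no_order39_unit_Ru :
    ¬ ∃ a c : ℤ, a + c = 1 ∧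
      (∃ n : ℕ, ((72 * c + 819 : ℤ) : ℚ) / 39 = n) ∧
      (∃ n : ℕ, ((-36 * c + 819 : ℤ) : ℚ) / 39 = n) ∧
      (∃ n : ℕ, ((c + 377 : ℤ) : ℚ) / 39 = n) ∧
      (∃ n : ℕ, ((-12 * a - 24 * c + 51 : ℤ) : ℚ) / 39 = n) := by
  rintro ⟨a, c, hac, h₁, -, h₃, h₄⟩
  have h39 : ((39 : ℕ) : ℚ) = 39 := Nat.cast_ofNat
  rw [← h39, exists_natCast_eq_intCast_div_iff (by norm_num)] at h₁ h₃ h₄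
  omega
end

section
/- For every pair (α, β) in the list {(466,436), (446,441), (546,416), (486,431), (566,411), (506,426), (426,446), (526,421)}, there are no integers a, b, c with a + b + c = 1 such that, setting t1 = 3a + 3b + c and t2 = 6a + b + 3c, the four rational numbers (1/65)(48·t1 + 402), (1/65)(−12·t1 + 387), (1/65)(48·t2 + α), (1/65)(−12·t2 + β) are all non-negative integers. -/
/-!
Since `48 ≡ 42⁻¹ [ZMOD 65]`, the divisibility `65 ∣ 48 t₁ + 402` forces `t₁ ≡ 16 [ZMOD 65]`,
and the two non-negativity conditions confine `t₁` to `[-8, 32]`, so `t₁ = 16`.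
But `a + b + c = 1` makes `t₁ = 3a + 3b + c = 3 - 2c` odd.
-/

theorem exists_nat_intCast_div_eq_iff {x d : ℤ} (hd : 0 < d) :
    (∃ n : ℕ, (x : ℚ) / d = n) ↔ 0 ≤ x ∧ d ∣ x := by
  have hd' : (d : ℚ) ≠ 0 := by exact_mod_cast hd.ne'
  constructor
  · rintro ⟨n, hn⟩
    have hx : x = d * n := by
      rw [div_eq_iff hd'] at hn
      exact_mod_cast hn.trans (mul_comm _ _)
    exact ⟨hx ▸ mul_nonneg hd.le n.cast_nonneg, ⟨n, hx⟩⟩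
  · rintro ⟨hx, k, rfl⟩
    lift k to ℕ using nonneg_of_mul_nonneg_right hx hd
    exact ⟨k, by push_cast; field_simp⟩

theorem modEq_sixteen_of_dvd {t : ℤ} (h : 65 ∣ 48 * t + 402) : t ≡ 16 [ZMOD 65] := by
  rw [Int.modEq_iff_dvd]
  omega

theorem eq_sixteen_of_dvd_of_nonneg {t : ℤ} (h₁ : 0 ≤ 48 * t + 402) (h₂ : 65 ∣ 48 * t + 402)
    (h₃ : 0 ≤ -12 * t + 387) : t = 16 := by
  have := (modEq_sixteen_of_dvd h₂).dvd
  omega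

/-- Luthar–Passi constraints excluding units of order 65 in `V(ℤRu)`: for every pair
`(α, β)` among the eight listed pairs, there are no integers `a, b, c` with
`a + b + c = 1` such that, with `t1 = 3a + 3b + c` and `t2 = 6a + b + 3c`, the
rationals `(1/65)(48t1 + 402)`, `(1/65)(−12t1 + 387)`, `(1/65)(48t2 + α)` and
`(1/65)(−12t2 + β)` are all non-negative integers. -/
theorem no_order65_unit_Ru :
    ∀ α β : ℤ, (α, β) ∈ [((466 : ℤ), (436 : ℤ)), (446, 441), (546, 416), (486, 431),
        (566, 411), (506, 426), (426, 446), (526, 421)] →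
      ¬ ∃ a b c : ℤ, a + b + c = 1 ∧
        (∃ n : ℕ, ((48 * (3 * a + 3 * b + c) + 402 : ℤ) : ℚ) / 65 = n) ∧
        (∃ n : ℕ, ((-12 * (3 * a + 3 * b + c) + 387 : ℤ) : ℚ) / 65 = n) ∧
        (∃ n : ℕ, ((48 * (6 * a + b + 3 * c) + α : ℤ) : ℚ) / 65 = n) ∧
        (∃ n : ℕ, ((-12 * (6 * a + b + 3 * c) + β : ℤ) : ℚ) / 65 = n) := by
  rintro α β - ⟨a, b, c, habc, h₁, h₂, -, -⟩
  obtain ⟨h₁_nonneg, h₁_dvd⟩ := (exists_nat_intCast_div_eq_iff (d := 65) (by norm_num)).1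
    (by exact_mod_cast h₁)
  obtain ⟨h₂_nonneg, -⟩ := (exists_nat_intCast_div_eq_iff (d := 65) (by norm_num)).1
    (by exact_mod_cast h₂)
  have ht : 3 * a + 3 * b + c = 16 := eq_sixteen_of_dvd_of_nonneg h₁_nonneg h₁_dvd h₂_nonneg
  have ht_odd : 3 * a + 3 * b + c = 3 - 2 * c := by linarith
  omega
end

section
/- There are no integers a, b, c, e with a + b + c + e = 1 such that, setting t = 3a + 3b + c + e, the two rational numbers (1/145)(112t + 418) and (1/145)(−28t + 403) are both non-negative integers. -/
/-!
Write `t = 3a + 3b + c + e`, `145 m = 112 t + 418` and `145 n = -28 t + 403`. Eliminating `t`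
gives `m + 4 n = 14`, so `0 ≤ n ≤ 3` once `m, n ≥ 0`. Reducing the second equation modulo `28`
gives `145 n ≡ 403`, i.e. `n ≡ 19 (mod 28)`, which is incompatible with `n ≤ 3`.
-/

theorem Int.eq_mul_of_cast_div_eq {K : Type*} [Field K] [CharZero K] {z k n : ℤ} (hk : k ≠ 0)
    (h : (z : K) / k = n) : z = k * n := by
  rw [div_eq_iff (Int.cast_ne_zero.mpr hk)] at h
  exact_mod_cast h.trans (mul_comm _ _)

section LutharPassi145

variable {t m n : ℤ}

theorem luthar_passi_145_add_four_mul (hm : 112 * t + 418 = 145 * m)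
    (hn : -28 * t + 403 = 145 * n) : m + 4 * n = 14 := by
  omega

theorem luthar_passi_145_emod (hn : -28 * t + 403 = 145 * n) : n % 28 = 19 := by
  omega

theorem not_luthar_passi_145 (hm : 112 * t + 418 = 145 * m) (hn : -28 * t + 403 = 145 * n)
    (hm₀ : 0 ≤ m) (hn₀ : 0 ≤ n) : False := by
  have hsum := luthar_passi_145_add_four_mul hm hn
  have hmod := luthar_passi_145_emod hn
  omega

end LutharPassi145

/-- Luthar–Passi constraints excluding units of order 145 in `V(ℤRu)`: there are no
integers `a, b, c, e` with `a + b + c + e = 1` such that, with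
`t = 3a + 3b + c + e`, the rationals `(1/145)(112t + 418)` and `(1/145)(−28t + 403)`
are both non-negative integers. -/
theorem no_order145_unit_Ru :
    ¬ ∃ a b c e : ℤ, a + b + c + e = 1 ∧
      (∃ n : ℕ, ((112 * (3 * a + 3 * b + c + e) + 418 : ℤ) : ℚ) / 145 = n) ∧
      (∃ n : ℕ, ((-28 * (3 * a + 3 * b + c + e) + 403 : ℤ) : ℚ) / 145 = n) := by
  rintro ⟨a, b, c, e, -, ⟨m, hm⟩, ⟨n, hn⟩⟩
  have hm' := Int.eq_mul_of_cast_div_eq (K := ℚ) (k := 145) (n := m) (by norm_num)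
    (by exact_mod_cast hm)
  have hn' := Int.eq_mul_of_cast_div_eq (K := ℚ) (k := 145) (n := n) (by norm_num)
    (by exact_mod_cast hn)
  exact not_luthar_passi_145 hm' hn' (Int.natCast_nonneg m) (Int.natCast_nonneg n)
end

section
/- There are no integers a, b, c with a + b + c = 1 such that the two rational numbers (1/377)(1008a + 442) and (1/377)(−84a + 403) are both non-negative integers. -/
/-!
Writing the two quotients as integers, both numerators must be divisible by `377 = 13 · 29`
and non-negative. Modulo 13 the first numerator is `7a`, so `13 ∣ a`; modulo 29 the second is
`3(1 - a)`, so `a ≡ 1 (mod 29)`. Non-negativity forces `0 ≤ a ≤ 4`, and then `13 ∣ a` gives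
`a = 0`, contradicting `a ≡ 1 (mod 29)`.
-/

theorem exists_nat_eq_intCast_div_iff {x : ℤ} {d : ℕ} (hd : 0 < d) :
    (∃ n : ℕ, (x : ℚ) / d = n) ↔ (d : ℤ) ∣ x ∧ 0 ≤ x := by
  have hd' : (d : ℚ) ≠ 0 := by positivity
  constructor
  · rintro ⟨n, h⟩
    rw [div_eq_iff hd'] at h
    have hx : x = n * d := by exact_mod_cast h
    exact ⟨⟨n, by rw [hx, mul_comm]⟩, hx ▸ by positivity⟩
  · rintro ⟨⟨k, rfl⟩, hx⟩
    have hk : 0 ≤ k := nonneg_of_mul_nonneg_right (by rwa [mul_comm] at hx) (by omega)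
    refine ⟨k.toNat, ?_⟩
    rw [Int.cast_mul, Int.cast_natCast, mul_div_cancel_left₀ _ hd']
    exact_mod_cast (Int.toNat_of_nonneg hk).symm

theorem false_of_order377_constraints {a : ℤ}
    (h₁ : 377 ∣ 1008 * a + 442) (h₁' : 0 ≤ 1008 * a + 442)
    (h₂ : 377 ∣ -84 * a + 403) (h₂' : 0 ≤ -84 * a + 403) : False := by
  have h13 : 13 ∣ a := by omega
  have h29 : 29 ∣ a - 1 := by omega
  have ha : 0 ≤ a ∧ a ≤ 4 := by omega
  have ha0 : a = 0 := by omega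
  subst ha0
  norm_num at h29

/-- Luthar–Passi constraints excluding units of order 377 in `V(ℤRu)`: there are no
integers `a, b, c` with `a + b + c = 1` such that `(1/377)(1008a + 442)` and
`(1/377)(−84a + 403)` are both non-negative integers. -/
theorem no_order377_unit_Ru :
    ¬ ∃ a b c : ℤ, a + b + c = 1 ∧
      (∃ n : ℕ, ((1008 * a + 442 : ℤ) : ℚ) / 377 = n) ∧
      (∃ n : ℕ, ((-84 * a + 403 : ℤ) : ℚ) / 377 = n) := by
  rintro ⟨a, -, -, -, h₁, h₂⟩
  obtain ⟨hdvd₁, hnonneg₁⟩ := (exists_nat_eq_intCast_div_iff (d := 377) (by norm_num)).1 h₁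
  obtain ⟨hdvd₂, hnonneg₂⟩ := (exists_nat_eq_intCast_div_iff (d := 377) (by norm_num)).1 h₂
  exact false_of_order377_constraints hdvd₁ hnonneg₁ hdvd₂ hnonneg₂
end
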